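/- arXiv:1501.00014 — 5 statements merged into one kernel-verified Lean document; each statement's English description precedes it below -/
import Mathlib

section
/- Let x = (x_1,...,x_N) be positive reals with integer sum M, let q ≥ 1, and let m* be a vector of nonnegative integers with ∑ m*_i = M minimizing ∑_i |x_i - m_i|^q over all nonnegative integer vectors m with ∑ m_i = M. Then for every i, m*_i ∈ {floor(x_i), ceil(x_i)}. -/
/-!
Write `dₖ = xₖ - m*ₖ`; these sum to zero. If `|dᵢ| ≥ 1`, say `dᵢ ≥ 1`, some `dⱼ` is negative, and
moving one unit from `m*ⱼ` to `m*ᵢ` strictly lowers the cost, because `t ↦ tᵠ` is superadditive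
on `[0, ∞)` for `q ≥ 1`: `(dᵢ - 1)ᵠ + 1 ≤ dᵢᵠ` while `|dⱼ + 1|ᵠ < 1 + |dⱼ|ᵠ`. The case `dᵢ ≤ -1` is
the mirror image. Hence `|xᵢ - m*ᵢ| < 1`, which pins `m*ᵢ` to `⌊xᵢ⌋` or `⌈xᵢ⌉`.
-/

open Finset Function

lemma Int.eq_floor_or_eq_ceil_of_abs_sub_lt_one {x : ℝ} {z : ℤ} (h : |x - z| < 1) :
    z = ⌊x⌋ ∨ z = ⌈x⌉ := by
  rcases abs_sub_lt_iff.mp h with ⟨h₁, h₂⟩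
  rcases le_or_gt (z : ℝ) x with hzx | hxz
  · exact Or.inl (Int.floor_eq_iff.mpr ⟨hzx, by linarith⟩).symm
  · exact Or.inr (Int.ceil_eq_iff.mpr ⟨by linarith, hxz.le⟩).symm

lemma abs_add_one_rpow_lt {a q : ℝ} (ha : a < 0) (hq : 0 ≤ q) : |a + 1| ^ q < 1 + |a| ^ q := by
  have hle : |a + 1| ≤ max 1 |a| := abs_le.mpr
    ⟨by linarith [le_max_right 1 |a|, neg_abs_le a], by linarith [le_max_left 1 |a|]⟩
  calc |a + 1| ^ q ≤ max 1 |a| ^ q := Real.rpow_le_rpow (abs_nonneg _) hle hq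
    _ = max 1 (|a| ^ q) := by rw [Real.rpow_max zero_le_one (abs_nonneg a) hq, Real.one_rpow]
    _ < 1 + |a| ^ q := max_lt (by linarith [Real.rpow_pos_of_pos (abs_pos.mpr ha.ne) q])
      (by linarith)

lemma abs_sub_one_rpow_add_one_le {b q : ℝ} (hb : 1 ≤ b) (hq : 1 ≤ q) :
    |b - 1| ^ q + 1 ≤ |b| ^ q := by
  have h := Real.add_rpow_le_rpow_add (sub_nonneg.mpr hb) zero_le_one hq
  rw [Real.one_rpow, sub_add_cancel] at h
  rwa [abs_of_nonneg (sub_nonneg.mpr hb), abs_of_nonneg (zero_le_one.trans hb)]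

lemma abs_rpow_transfer_lt {a b q : ℝ} (hq : 1 ≤ q) (ha : a < 0) (hb : 1 ≤ b) :
    |a + 1| ^ q + |b - 1| ^ q < |a| ^ q + |b| ^ q := by
  linarith [abs_add_one_rpow_lt ha (zero_le_one.trans hq), abs_sub_one_rpow_add_one_le hb hq]

lemma abs_rpow_transfer_lt' {a b q : ℝ} (hq : 1 ≤ q) (ha : a ≤ -1) (hb : 0 < b) :
    |a + 1| ^ q + |b - 1| ^ q < |a| ^ q + |b| ^ q := by
  have h := abs_rpow_transfer_lt hq (neg_neg_of_pos hb) (le_neg_of_le_neg ha)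
  rw [show -b + 1 = -(b - 1) by ring, show -a - 1 = -(a + 1) by ring, abs_neg, abs_neg, abs_neg,
    abs_neg] at h
  linarith

section Transfer

variable {ι : Type*} [Fintype ι] [DecidableEq ι]

lemma Finset.sum_apply_update_add {β α : Type*} [AddCommMonoid α] (f : ι → β → α) (m : ι → β)
    (a : ι) (v : β) : ∑ k, f k (update m a v k) + f a (m a) = ∑ k, f k (m k) + f a v := by
  rw [← add_sum_erase _ _ (mem_univ a), ← add_sum_erase _ _ (mem_univ a), update_self,
    sum_congr rfl fun k hk => by rw [update_of_ne (ne_of_mem_erase hk)]]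
  abel

def transfer (m : ι → ℕ) (a b : ι) : ι → ℕ :=
  update (update m a (m a - 1)) b (m b + 1)

lemma sum_apply_transfer_add {α : Type*} [AddCommMonoid α] (f : ι → ℕ → α) (m : ι → ℕ)
    {a b : ι} (hab : a ≠ b) :
    ∑ k, f k (transfer m a b k) + f a (m a) + f b (m b)
      = ∑ k, f k (m k) + f a (m a - 1) + f b (m b + 1) := by
  have hb := sum_apply_update_add f (update m a (m a - 1)) b (m b + 1)
  rw [update_of_ne hab.symm] at hb
  rw [transfer, add_right_comm, hb, add_right_comm, sum_apply_update_add, add_right_comm]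

lemma sum_transfer (m : ι → ℕ) {a b : ι} (hab : a ≠ b) (ha : 1 ≤ m a) :
    ∑ k, transfer m a b k = ∑ k, m k := by
  have h := sum_apply_transfer_add (fun _ n => n) m hab
  omega

lemma add_le_add_transfer_of_isMinimal {φ : ι → ℕ → ℝ} {m : ι → ℕ} {M : ℕ} (hm : ∑ k, m k = M)
    (hmin : ∀ m' : ι → ℕ, ∑ k, m' k = M → ∑ k, φ k (m k) ≤ ∑ k, φ k (m' k))
    {a b : ι} (hab : a ≠ b) (ha : 1 ≤ m a) :
    φ a (m a) + φ b (m b) ≤ φ a (m a - 1) + φ b (m b + 1) := by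
  have h := hmin (transfer m a b) ((sum_transfer m hab ha).trans hm)
  linarith [sum_apply_transfer_add φ m hab]

end Transfer

lemma exists_lt_of_sum_eq_of_lt {ι M : Type*} [Fintype ι] [AddCommMonoid M] [LinearOrder M]
    [IsOrderedCancelAddMonoid M] {f g : ι → M} (h : ∑ k, f k = ∑ k, g k) {i : ι}
    (hi : g i < f i) : ∃ j, f j < g j := by
  by_contra! hle
  exact (sum_lt_sum (fun k _ => hle k) ⟨i, mem_univ i, hi⟩).ne h.symm

theorem stmt1_general (N : ℕ) (x : Fin N → ℝ) (hx : ∀ i, 0 < x i)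
    (M : ℕ) (hsum : ∑ i, x i = (M : ℝ)) (q : ℝ) (hq : 1 ≤ q)
    (mstar : Fin N → ℕ) (hms : ∑ i, mstar i = M)
    (hmin : ∀ m : Fin N → ℕ, ∑ i, m i = M →
      ∑ i, |x i - (mstar i : ℝ)| ^ q ≤ ∑ i, |x i - (m i : ℝ)| ^ q) :
    ∀ i, (mstar i : ℤ) = ⌊x i⌋ ∨ (mstar i : ℤ) = ⌈x i⌉ := by
  have hexchange : ∀ a b, a ≠ b → x a < mstar a →
      |x a - mstar a| ^ q + |x b - mstar b| ^ q
        ≤ |x a - mstar a + 1| ^ q + |x b - mstar b - 1| ^ q := by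
    intro a b hab ha
    have h1 : 1 ≤ mstar a := Nat.cast_pos.mp ((hx a).trans ha)
    convert add_le_add_transfer_of_isMinimal (φ := fun k n => |x k - n| ^ q) hms hmin hab h1
      using 4 <;> push_cast [Nat.cast_sub h1] <;> ring
  have hcast : ∑ k, (mstar k : ℝ) = ∑ k, x k := by rw [hsum]; exact_mod_cast hms
  intro i
  apply Int.eq_floor_or_eq_ceil_of_abs_sub_lt_one
  push_cast
  by_contra! h
  rcases le_abs'.mp h with hneg | hpos
  · obtain ⟨j, hj⟩ := exists_lt_of_sum_eq_of_lt hcast (i := i) (by linarith)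
    have hij : i ≠ j := by rintro rfl; linarith
    exact (hexchange i j hij (by linarith)).not_gt
      (abs_rpow_transfer_lt' hq hneg (by linarith))
  · obtain ⟨j, hj⟩ := exists_lt_of_sum_eq_of_lt hcast.symm (i := i) (by linarith)
    have hji : j ≠ i := by rintro rfl; linarith
    exact (hexchange j i hji hj).not_gt (abs_rpow_transfer_lt hq (by linarith) hpos)

theorem stmt1 (N : ℕ) (hN : 1 ≤ N) (x : Fin N → ℝ) (hx : ∀ i, 0 < x i)
    (M : ℕ) (hsum : ∑ i, x i = (M : ℝ)) (q : ℝ) (hq : 1 ≤ q)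
    (mstar : Fin N → ℕ) (hms : ∑ i, mstar i = M)
    (hmin : ∀ m : Fin N → ℕ, ∑ i, m i = M →
      ∑ i, |x i - (mstar i : ℝ)| ^ q ≤ ∑ i, |x i - (m i : ℝ)| ^ q) :
    ∀ i, (mstar i : ℤ) = ⌊x i⌋ ∨ (mstar i : ℤ) = ⌈x i⌉ :=
  stmt1_general N x hx M hsum q hq mstar hms hmin
end

section
/- Let x be a positive real vector with integer sum M, and suppose m_i < floor(x_i) for some i and m_j > ceil(x_j) for some j ≠ i, where m is a nonnegative integer vector with sum M. Define y by y_i = m_i + 1, y_j = m_j - 1, and y_k = m_k otherwise. Then ∑ y_k = M and for every q ≥ 1, ∑_k |x_k - y_k|^q < ∑_k |x_k - m_k|^q. -/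
/-!
Moving one unit from `m j` to `m i` keeps the total. Since `m i + 1 ≤ x i` and `x j ≤ m j - 1`,
the move brings both of these coordinates strictly closer to `x` and leaves the others alone,
and `t ↦ t ^ q` is strictly increasing on `[0, ∞)` for `q > 0`.
-/

open Finset Function

theorem Fintype.sum_update_update_of_eq_add {ι M : Type*} [Fintype ι] [DecidableEq ι]
    [AddCancelCommMonoid M] (f : ι → M) {i j : ι} (hij : i ≠ j) {a c : M} (hf : f j = a + c) :
    ∑ k, update (update f i (f i + c)) j a k = ∑ k, f k := by
  have hpt : update (update f i (f i + c)) j a + Pi.single j c = f + Pi.single i c := by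
    ext k
    rcases eq_or_ne k j with rfl | hkj
    · simp [hij.symm, hf]
    rcases eq_or_ne k i with rfl | hki
    · simp [hkj]
    · simp [hkj, hki]
  have hsum := congrArg (fun g => ∑ k, g k) hpt
  simp only [Pi.add_apply, sum_add_distrib, sum_pi_single'] at hsum
  exact add_right_cancel hsum

theorem abs_sub_lt_abs_sub_of_lt_of_le {a b c : ℝ} (hcb : c < b) (hba : b ≤ a) :
    |a - b| < |a - c| := by
  rw [abs_of_nonneg (by linarith), abs_of_nonneg (by linarith)]
  linarith

theorem abs_sub_lt_abs_sub_of_le_of_lt {a b c : ℝ} (hab : a ≤ b) (hbc : b < c) :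
    |a - b| < |a - c| := by
  rw [abs_of_nonpos (by linarith), abs_of_nonpos (by linarith)]
  linarith

theorem Fintype.sum_rpow_abs_sub_lt {ι : Type*} [Fintype ι] {x u v : ι → ℝ} {q : ℝ} (hq : 0 < q)
    (hle : ∀ k, |x k - u k| ≤ |x k - v k|) (hlt : ∃ k, |x k - u k| < |x k - v k|) :
    ∑ k, |x k - u k| ^ q < ∑ k, |x k - v k| ^ q := by
  obtain ⟨k₀, hk₀⟩ := hlt
  exact sum_lt_sum (fun k _ => Real.rpow_le_rpow (abs_nonneg _) (hle k) hq.le)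
    ⟨k₀, mem_univ _, Real.rpow_lt_rpow (abs_nonneg _) hk₀ hq⟩

theorem stmt3_general (N : ℕ) (x : Fin N → ℝ) (hx : ∀ k, 0 < x k)
    (M : ℕ) (m : Fin N → ℕ) (hm : ∑ k, m k = M)
    (i j : Fin N) (hij : i ≠ j)
    (hi : (m i : ℤ) < ⌊x i⌋) (hj : (m j : ℤ) > ⌈x j⌉)
    (y : Fin N → ℕ)
    (hy : y = Function.update (Function.update m i (m i + 1)) j (m j - 1)) :
    ∑ k, y k = M ∧
      ∀ q : ℝ, 1 ≤ q →
        ∑ k, |x k - (y k : ℝ)| ^ q < ∑ k, |x k - (m k : ℝ)| ^ q := by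
  have hmj : 1 ≤ m j := by have := Int.ceil_pos.mpr (hx j); omega
  have hxi : (m i : ℝ) + 1 ≤ x i := by
    exact_mod_cast Int.le_floor.mp (by omega : (m i : ℤ) + 1 ≤ ⌊x i⌋)
  have hxj : x j ≤ (m j : ℝ) - 1 := by
    exact_mod_cast Int.ceil_le.mp (by omega : ⌈x j⌉ ≤ (m j : ℤ) - 1)
  have hyi : (y i : ℝ) = m i + 1 := by simp [hy, hij]
  have hyj : (y j : ℝ) = m j - 1 := by simp [hy, hmj]
  have hi_closer : |x i - y i| < |x i - m i| :=
    hyi ▸ abs_sub_lt_abs_sub_of_lt_of_le (lt_add_one _) hxi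
  have hy_sum : ∑ k, y k = M := by
    rw [hy, ← hm]
    exact Fintype.sum_update_update_of_eq_add m hij (Nat.sub_add_cancel hmj).symm
  refine ⟨hy_sum, fun q hq =>
    Fintype.sum_rpow_abs_sub_lt (by linarith) (fun k => ?_) ⟨i, hi_closer⟩⟩
  rcases eq_or_ne k i with rfl | hki
  · exact hi_closer.le
  rcases eq_or_ne k j with rfl | hkj
  · exact (hyj ▸ abs_sub_lt_abs_sub_of_le_of_lt hxj (sub_one_lt _)).le
  · simp [hy, hki, hkj]

theorem stmt3 (N : ℕ) (hN : 2 ≤ N) (x : Fin N → ℝ) (hx : ∀ k, 0 < x k)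
    (M : ℕ) (hsum : ∑ k, x k = (M : ℝ)) (m : Fin N → ℕ) (hm : ∑ k, m k = M)
    (i j : Fin N) (hij : i ≠ j)
    (hi : (m i : ℤ) < ⌊x i⌋) (hj : (m j : ℤ) > ⌈x j⌉)
    (y : Fin N → ℕ)
    (hy : y = Function.update (Function.update m i (m i + 1)) j (m j - 1)) :
    ∑ k, y k = M ∧
      ∀ q : ℝ, 1 ≤ q →
        ∑ k, |x k - (y k : ℝ)| ^ q < ∑ k, |x k - (m k : ℝ)| ^ q :=
  stmt3_general N x hx M m hm i j hij hi hj y hy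
end

section
/- Let x be a positive real vector with integer sum M whose fractional parts are nonincreasing, let I = M - ∑ floor(x_i), and let m* round up the first I components and round down the rest. Then for any nonnegative integer vector m with ∑ m_i = M and m_i ∈ {floor(x_i), ceil(x_i)} for all i, and for any q ≥ 1, we have ∑_i |x_i - m*_i|^q ≤ ∑_i |x_i - m_i|^q. -/
/-!
Rounding `x` down costs `fract x ^ q` and rounding it to `⌊x⌋ + 1` costs `(1 - fract x) ^ q`,
so the cost of any feasible rounding is `∑ fract (x i) ^ q` minus the gain
`t ^ q - (1 - t) ^ q` (monotone in `t = fract (x i)`) summed over the coordinates rounded up.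
Exactly `I` coordinates are rounded up, whatever the rounding, so the cost is least when the
gain is collected on the `I` largest fractional parts, i.e. on the first `I` coordinates; these
are not integers because the fractional parts add up to `I`.
-/

open Finset

theorem Finset.sum_le_sum_of_card_eq_of_forall_sdiff_le {ι β : Type*} [DecidableEq ι]
    [AddCommMonoid β] [LinearOrder β] [IsOrderedCancelAddMonoid β]
    {S T : Finset ι} {g : ι → β} (hcard : #S = #T)
    (hle : ∀ a ∈ T \ S, ∀ b ∈ S \ T, g b ≤ g a) : ∑ i ∈ S, g i ≤ ∑ i ∈ T, g i := by
  rw [← sum_inter_add_sum_sdiff S T, ← sum_inter_add_sum_sdiff T S, inter_comm]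
  gcongr ?_ + ?_
  · exact le_rfl
  rcases (T \ S).eq_empty_or_nonempty with hTS | hTS
  · rw [card_eq_zero.1 ((card_sdiff_comm hcard).trans (by rw [hTS, card_empty])), hTS]
  obtain ⟨a, ha, hmin⟩ := exists_mem_eq_inf' hTS g
  calc ∑ i ∈ S \ T, g i ≤ #(S \ T) • g a := sum_le_card_nsmul _ _ _ fun b hb ↦ hle a ha b hb
    _ = #(T \ S) • (T \ S).inf' hTS g := by rw [card_sdiff_comm hcard, hmin]
    _ ≤ ∑ i ∈ T \ S, g i := card_nsmul_le_sum _ _ _ fun b hb ↦ inf'_le g hb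

theorem Fin.pos_of_antitone_of_lt_sum {N : ℕ} {f : Fin N → ℝ} (hf : Antitone f)
    (hf1 : ∀ j, f j ≤ 1) {i : Fin N} (hi : (i : ℝ) < ∑ j, f j) : 0 < f i := by
  by_contra! hi0
  refine hi.not_ge ?_
  calc ∑ j, f j ≤ ∑ j, if j < i then (1 : ℝ) else 0 :=
        sum_le_sum fun j _ ↦ by
          split_ifs with hj
          · exact hf1 j
          · exact (hf (not_lt.1 hj)).trans hi0
    _ = i := by simp [filter_gt_eq_Iio]

theorem Real.monotoneOn_rpow_sub_one_sub_rpow {q : ℝ} (hq : 0 ≤ q) :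
    MonotoneOn (fun t : ℝ ↦ t ^ q - (1 - t) ^ q) (Set.Icc 0 1) := by
  intro s ⟨hs0, _⟩ t ⟨_, ht1⟩ hst
  have h1 : s ^ q ≤ t ^ q := rpow_le_rpow hs0 hst hq
  have h2 : (1 - t) ^ q ≤ (1 - s) ^ q := rpow_le_rpow (by linarith) (by linarith) hq
  dsimp only
  linarith

theorem abs_sub_floor (x : ℝ) : |x - ⌊x⌋| = Int.fract x := by
  rw [← Int.fract, abs_of_nonneg (Int.fract_nonneg x)]

theorem abs_sub_floor_add_one (x : ℝ) : |x - ((⌊x⌋ + 1 : ℤ) : ℝ)| = 1 - Int.fract x := by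
  rw [Int.cast_add, Int.cast_one, ← sub_sub, ← Int.fract, abs_sub_comm,
    abs_of_nonneg (by linarith [Int.fract_lt_one x])]

theorem Int.eq_floor_add_ite_of_eq_floor_or_eq_ceil {x : ℝ} {n : ℤ}
    (h : n = ⌊x⌋ ∨ n = ⌈x⌉) : n = ⌊x⌋ + if n = ⌊x⌋ + 1 then 1 else 0 := by
  have := Int.floor_le_ceil x; have := Int.ceil_le_floor_add_one x
  split_ifs <;> omega

theorem Int.toNat_ite_ceil_floor {x : ℝ} (hx : 0 ≤ x) {p : Prop} [Decidable p]
    (hp : p → Int.fract x ≠ 0) :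
    ((if p then ⌈x⌉.toNat else ⌊x⌋.toNat : ℕ) : ℤ) = ⌊x⌋ + if p then 1 else 0 := by
  split_ifs with h
  · rw [toNat_of_nonneg (ceil_nonneg hx),
      (ceil_eq_floor_add_one_iff_notMem x).2 (fract_ne_zero_iff.1 (hp h))]
  · rw [toNat_of_nonneg (floor_nonneg.2 hx), add_zero]

theorem sum_eq_sum_floor_add_card {ι : Type*} [Fintype ι] [DecidableEq ι] (x : ι → ℝ)
    (n : ι → ℤ) (U : Finset ι) (hn : ∀ i, n i = ⌊x i⌋ + if i ∈ U then 1 else 0) :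
    ∑ i, n i = ∑ i, ⌊x i⌋ + #U := by
  simp only [hn, sum_add_distrib, sum_boole, filter_mem_eq_inter, univ_inter]

theorem sum_abs_sub_rpow_of_eq_floor_add_ite {ι : Type*} [Fintype ι] [DecidableEq ι]
    (x : ι → ℝ) (n : ι → ℤ) (U : Finset ι) (q : ℝ)
    (hn : ∀ i, n i = ⌊x i⌋ + if i ∈ U then 1 else 0) :
    ∑ i, |x i - n i| ^ q = ∑ i, Int.fract (x i) ^ q -
      ∑ i ∈ U, (Int.fract (x i) ^ q - (1 - Int.fract (x i)) ^ q) := by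
  rw [← univ_inter U, ← sum_ite_mem, ← sum_sub_distrib]
  refine sum_congr rfl fun i _ ↦ ?_
  rw [hn i]
  split_ifs
  · rw [abs_sub_floor_add_one]; ring
  · rw [add_zero, abs_sub_floor, sub_zero]

theorem stmt8_general (N : ℕ) (x : Fin N → ℝ) (hx : ∀ i, 0 < x i)
    (M : ℕ) (hsum : ∑ i, x i = (M : ℝ))
    (hsort : ∀ i j : Fin N, i ≤ j → x j - ⌊x j⌋ ≤ x i - ⌊x i⌋)
    (I : ℕ) (hI : (I : ℤ) = (M : ℤ) - ∑ i, ⌊x i⌋)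
    (mstar : Fin N → ℕ)
    (hms : ∀ i : Fin N,
      mstar i = if (i : ℕ) < I then (⌈x i⌉).toNat else (⌊x i⌋).toNat)
    (q : ℝ) (hq : 1 ≤ q)
    (m : Fin N → ℕ) (hm : ∑ i, m i = M)
    (hfeas : ∀ i, (m i : ℤ) = ⌊x i⌋ ∨ (m i : ℤ) = ⌈x i⌉) :
    ∑ i, |x i - (mstar i : ℝ)| ^ q ≤ ∑ i, |x i - (m i : ℝ)| ^ q := by
  set f : Fin N → ℝ := fun i ↦ Int.fract (x i) with hf_def
  have hf : Antitone f := fun i j hij ↦ hsort i j hij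
  have hf1 : ∀ i, f i ≤ 1 := fun i ↦ (Int.fract_lt_one _).le
  have hfI : ∑ i, f i = I := by
    rw [show (I : ℝ) = ((I : ℤ) : ℝ) by norm_cast, hI]
    push_cast
    simp only [hf_def, Int.fract, sum_sub_distrib, hsum]
  set U : Finset (Fin N) := {i | (m i : ℤ) = ⌊x i⌋ + 1}
  set T : Finset (Fin N) := {i | (i : ℕ) < I}
  have hmU : ∀ i, (m i : ℤ) = ⌊x i⌋ + if i ∈ U then 1 else 0 := fun i ↦ by
    simpa [U] using Int.eq_floor_add_ite_of_eq_floor_or_eq_ceil (hfeas i)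
  have hmT : ∀ i, (mstar i : ℤ) = ⌊x i⌋ + if i ∈ T then 1 else 0 := fun i ↦ by
    simpa [hms, T] using Int.toNat_ite_ceil_floor (hx i).le fun hi ↦
      (Fin.pos_of_antitone_of_lt_sum hf hf1 (by rw [hfI]; exact_mod_cast hi)).ne'
  have hU : #U = I := by
    have : ∑ i, (m i : ℤ) = M := by exact_mod_cast hm
    have := sum_eq_sum_floor_add_card x _ U hmU
    omega
  have hT : #T = I := by
    have hIN : (I : ℝ) ≤ N := hfI ▸ (sum_le_sum fun i _ ↦ hf1 i).trans_eq (by simp)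
    rw [Fin.card_filter_val_lt, min_eq_right (by exact_mod_cast hIN)]
  have hgain : ∀ a ∈ T \ U, ∀ b ∈ U \ T, f b ^ q - (1 - f b) ^ q ≤ f a ^ q - (1 - f a) ^ q := by
    intro a ha b hb
    simp only [T, mem_sdiff, mem_filter_univ] at ha hb
    exact Real.monotoneOn_rpow_sub_one_sub_rpow (by linarith)
      ⟨Int.fract_nonneg _, hf1 b⟩ ⟨Int.fract_nonneg _, hf1 a⟩ (hf (Fin.le_def.2 (by omega)))
  have hcost_star := sum_abs_sub_rpow_of_eq_floor_add_ite x _ T q hmT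
  have hcost := sum_abs_sub_rpow_of_eq_floor_add_ite x _ U q hmU
  push_cast at hcost_star hcost
  rw [hcost_star, hcost]
  exact sub_le_sub_left (sum_le_sum_of_card_eq_of_forall_sdiff_le (hU.trans hT.symm) hgain) _

theorem stmt8 (N : ℕ) (hN : 1 ≤ N) (x : Fin N → ℝ) (hx : ∀ i, 0 < x i)
    (M : ℕ) (hsum : ∑ i, x i = (M : ℝ))
    (hsort : ∀ i j : Fin N, i ≤ j → x j - ⌊x j⌋ ≤ x i - ⌊x i⌋)
    (I : ℕ) (hI : (I : ℤ) = (M : ℤ) - ∑ i, ⌊x i⌋)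
    (mstar : Fin N → ℕ)
    (hms : ∀ i : Fin N,
      mstar i = if (i : ℕ) < I then (⌈x i⌉).toNat else (⌊x i⌋).toNat)
    (q : ℝ) (hq : 1 ≤ q)
    (m : Fin N → ℕ) (hm : ∑ i, m i = M)
    (hfeas : ∀ i, (m i : ℤ) = ⌊x i⌋ ∨ (m i : ℤ) = ⌈x i⌉) :
    ∑ i, |x i - (mstar i : ℝ)| ^ q ≤ ∑ i, |x i - (m i : ℝ)| ^ q :=
  stmt8_general N x hx M hsum hsort I hI mstar hms q hq m hm hfeas
end

section
/- Let x be a positive real vector with integer sum M and I = M - ∑ floor(x_i). The optimal value of Problem 1 for q = 1 is V_1(x) = ∑_{i=1}^{I} (1 - f_{(i)}) + ∑_{i=I+1}^{N} f_{(i)}, where f_{(1)} ≥ ... ≥ f_{(N)} are the fractional parts of the x_i sorted in nonincreasing order. -/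
/-!
Write `m i = ⌊x i⌋ + e i`; the cost becomes `∑ |f i - e i|` over integer vectors `e` with
`∑ e i = I`. This is a Lagrangian duality argument: for every multiplier `c ∈ [-1, 1]` and every
integer `e`, `|f - e| ≥ min f (1 - f - c) + c * e` (compare the cases `e ≤ 0` and `e ≥ 1`), so
summing gives `∑ |f i - e i| ≥ c * I + ∑ i, min (f i) (1 - f i - c)`. Taking `c = 1 - 2 f_(I+1)`,
the minimum is `1 - f i - c` exactly on the `I` largest fractional parts and `f i` elsewhere, and
the bound becomes the claimed value, which is attained by rounding up exactly those `I` entries.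
-/

open Finset

lemma min_add_mul_le_abs_sub_intCast {g c : ℝ} (hc0 : -1 ≤ c) (hc1 : c ≤ 1) (e : ℤ) :
    min g (1 - g - c) + c * e ≤ |g - e| := by
  rcases le_or_gt e 0 with he | he
  · have he' : (e : ℝ) ≤ 0 := by exact_mod_cast he
    have := min_le_left g (1 - g - c)
    have := le_abs_self (g - e)
    nlinarith
  · have he' : (1 : ℝ) ≤ e := by exact_mod_cast he
    have := min_le_right g (1 - g - c)
    have := neg_abs_le (g - e)
    nlinarith

section
variable {ι κ : Type*} [Fintype ι] [Fintype κ]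

-- `V_1(x)` is the least element of `l1RoundingCosts x M`.
def l1RoundingCosts (x : ι → ℝ) (M : ℕ) : Set ℝ :=
  {v | ∃ m : ι → ℕ, ∑ i, m i = M ∧ v = ∑ i, |x i - m i|}

lemma l1RoundingCosts_comp_equiv (x : ι → ℝ) (M : ℕ) (σ : κ ≃ ι) :
    l1RoundingCosts (x ∘ σ) M = l1RoundingCosts x M := by
  ext v
  constructor
  · rintro ⟨m, hm, rfl⟩
    refine ⟨m ∘ σ.symm, ?_, ?_⟩
    · rw [← hm, ← Equiv.sum_comp σ]; simp
    · rw [← Equiv.sum_comp σ]; simp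
  · rintro ⟨m, hm, rfl⟩
    exact ⟨m ∘ σ, (Equiv.sum_comp σ m).trans hm, (Equiv.sum_comp σ _).symm⟩

variable [DecidableEq ι]

lemma exists_separating_multiplier (g : ι → ℝ) (hg0 : ∀ i, 0 ≤ g i) (hg1 : ∀ i, g i ≤ 1)
    (S : Finset ι) (hS : ∀ j ∈ S, ∀ k ∉ S, g k ≤ g j) :
    ∃ c, -1 ≤ c ∧ c ≤ 1 ∧ (∀ j ∈ S, 1 - 2 * g j ≤ c) ∧ ∀ k ∉ S, c ≤ 1 - 2 * g k := by
  rcases Sᶜ.eq_empty_or_nonempty with hSc | hSc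
  · refine ⟨1, by norm_num, le_rfl, fun j _ => by linarith [hg0 j], ?_⟩
    intro k hk
    simp [← mem_compl, hSc] at hk
  · obtain ⟨k₀, hk₀, hmax⟩ := Sᶜ.exists_max_image g hSc
    rw [mem_compl] at hk₀
    refine ⟨1 - 2 * g k₀, by linarith [hg1 k₀], by linarith [hg0 k₀],
      fun j hj => by linarith [hS j hj k₀ hk₀], fun k hk => ?_⟩
    linarith [hmax k (mem_compl.mpr hk)]

lemma sum_le_sum_abs_sub_intCast (g : ι → ℝ) (hg0 : ∀ i, 0 ≤ g i) (hg1 : ∀ i, g i ≤ 1)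
    (S : Finset ι) (hS : ∀ j ∈ S, ∀ k ∉ S, g k ≤ g j) (e : ι → ℤ) (he : ∑ i, e i = #S) :
    ∑ i ∈ S, (1 - g i) + ∑ i ∈ Sᶜ, g i ≤ ∑ i, |g i - e i| := by
  obtain ⟨c, hc0, hc1, hcS, hcSc⟩ := exists_separating_multiplier g hg0 hg1 S hS
  have he' : ∑ i, (e i : ℝ) = #S := by exact_mod_cast he
  calc ∑ i ∈ S, (1 - g i) + ∑ i ∈ Sᶜ, g i
      = ∑ i ∈ S, (1 - g i - c) + ∑ i ∈ Sᶜ, g i + c * ∑ i, (e i : ℝ) := by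
        rw [he', sum_sub_distrib (s := S) (f := fun i => 1 - g i), sum_const, nsmul_eq_mul]
        ring
    _ = ∑ i, (min (g i) (1 - g i - c) + c * e i) := by
        rw [sum_add_distrib, ← mul_sum, ← sum_add_sum_compl S fun i => min (g i) (1 - g i - c)]
        congr 2
        · exact sum_congr rfl fun j hj => (min_eq_right (by linarith [hcS j hj])).symm
        · exact sum_congr rfl fun k hk =>
            (min_eq_left (by linarith [hcSc k (mem_compl.mp hk)])).symm
    _ ≤ ∑ i, |g i - e i| :=
        sum_le_sum fun i _ => min_add_mul_le_abs_sub_intCast hc0 hc1 (e i)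

theorem isLeast_l1RoundingCosts (y : ι → ℝ) (hy : ∀ i, 0 ≤ y i) (S : Finset ι)
    (hS : ∀ j ∈ S, ∀ k ∉ S, Int.fract (y k) ≤ Int.fract (y j)) (M : ℕ)
    (hM : ∑ i, ⌊y i⌋₊ + #S = M) :
    IsLeast (l1RoundingCosts y M)
      (∑ i ∈ S, (1 - Int.fract (y i)) + ∑ i ∈ Sᶜ, Int.fract (y i)) := by
  have hfloor i : (⌊y i⌋₊ : ℝ) = y i - Int.fract (y i) := by
    rw [natCast_floor_eq_intCast_floor (hy i), Int.self_sub_fract]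
  constructor
  · refine ⟨fun i => ⌊y i⌋₊ + if i ∈ S then 1 else 0, ?_, ?_⟩
    · rw [← hM, sum_add_distrib, sum_boole, filter_mem_eq_inter, univ_inter, Nat.cast_id]
    · rw [← sum_add_sum_compl S]
      congr 1
      · refine sum_congr rfl fun i hi => ?_
        dsimp only; rw [if_pos hi]; push_cast
        rw [hfloor, abs_of_nonpos (by linarith [Int.fract_lt_one (y i)])]; ring
      · refine sum_congr rfl fun i hi => ?_
        dsimp only; rw [if_neg (mem_compl.mp hi)]; push_cast
        rw [hfloor, abs_of_nonneg (by linarith [Int.fract_nonneg (y i)])]; ring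
  · rintro v ⟨m, hm, rfl⟩
    have hcost i : |y i - m i| = |Int.fract (y i) - ((m i - ⌊y i⌋₊ : ℤ) : ℝ)| := by
      push_cast; rw [hfloor]; congr 1; ring
    simp_rw [hcost]
    refine sum_le_sum_abs_sub_intCast _ (fun i => Int.fract_nonneg _)
      (fun i => (Int.fract_lt_one _).le) S hS _ ?_
    rw [sum_sub_distrib]
    have : ∑ i, (m i : ℤ) = ∑ i, (⌊y i⌋₊ : ℤ) + #S := by exact_mod_cast hm.trans hM.symm
    omega

end

theorem stmt14_general (N : ℕ) (x : Fin N → ℝ) (hx : ∀ i, 0 < x i)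
    (M : ℕ) (hsum : ∑ i, x i = (M : ℝ))
    (I : ℕ) (hI : (I : ℤ) = (M : ℤ) - ∑ i, ⌊x i⌋)
    (g : Fin N → ℝ) (σ : Equiv.Perm (Fin N))
    (hg : ∀ i, g i = x (σ i) - ⌊x (σ i)⌋)
    (hsort : ∀ i j : Fin N, i ≤ j → g j ≤ g i) :
    IsLeast {v : ℝ | ∃ m : Fin N → ℕ, ∑ i, m i = M ∧ v = ∑ i, |x i - (m i : ℝ)|}
      (∑ i ∈ Finset.univ.filter (fun i : Fin N => (i : ℕ) < I), (1 - g i)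
        + ∑ i ∈ Finset.univ.filter (fun i : Fin N => I ≤ (i : ℕ)), g i) := by
  obtain rfl : g = fun i => Int.fract (x (σ i)) :=
    funext fun i => (hg i).trans (Int.self_sub_floor _)
  have hI_eq_sum_fract : (I : ℝ) = ∑ i, Int.fract (x i) := by
    have : (I : ℝ) = M - ∑ i, (⌊x i⌋ : ℝ) := by exact_mod_cast hI
    rw [this, ← hsum, ← sum_sub_distrib]
    simp only [Int.self_sub_floor]
  have hIN : I ≤ N := by
    have : ∑ i, Int.fract (x i) ≤ N := by
      simpa using sum_le_sum fun i (_ : i ∈ univ) => (Int.fract_lt_one (x i)).le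
    exact_mod_cast hI_eq_sum_fract ▸ this
  have hcard : #(univ.filter fun i : Fin N => (i : ℕ) < I) = I := by
    rw [Fin.card_filter_val_lt, min_eq_right hIN]
  have hM : ∑ i, ⌊x (σ i)⌋₊ + #(univ.filter fun i : Fin N => (i : ℕ) < I) = M := by
    have : ((∑ i, ⌊x i⌋₊ : ℕ) : ℤ) = ∑ i, ⌊x i⌋ := by
      push_cast
      exact sum_congr rfl fun i _ => Int.natCast_floor_eq_floor (hx i).le
    rw [hcard, Equiv.sum_comp σ fun i => ⌊x i⌋₊]
    omega
  have hcompl : (univ.filter fun i : Fin N => (i : ℕ) < I)ᶜ =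
      univ.filter fun i : Fin N => I ≤ (i : ℕ) := by
    ext; simp
  change IsLeast (l1RoundingCosts x M) _
  rw [← l1RoundingCosts_comp_equiv x M σ, ← hcompl]
  exact isLeast_l1RoundingCosts (x ∘ σ) (fun i => (hx _).le) _
    (fun j hj k hk => hsort j k (by simp at hj hk; omega)) M hM

theorem stmt14 (N : ℕ) (hN : 1 ≤ N) (x : Fin N → ℝ) (hx : ∀ i, 0 < x i)
    (M : ℕ) (hsum : ∑ i, x i = (M : ℝ))
    (I : ℕ) (hI : (I : ℤ) = (M : ℤ) - ∑ i, ⌊x i⌋)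
    (g : Fin N → ℝ) (σ : Equiv.Perm (Fin N))
    (hg : ∀ i, g i = x (σ i) - ⌊x (σ i)⌋)
    (hsort : ∀ i j : Fin N, i ≤ j → g j ≤ g i) :
    IsLeast {v : ℝ | ∃ m : Fin N → ℕ, ∑ i, m i = M ∧ v = ∑ i, |x i - (m i : ℝ)|}
      (∑ i ∈ Finset.univ.filter (fun i : Fin N => (i : ℕ) < I), (1 - g i)
        + ∑ i ∈ Finset.univ.filter (fun i : Fin N => I ≤ (i : ℕ)), g i) :=
  stmt14_general N x hx M hsum I hI g σ hg hsort
end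

section
/- Let x be a positive real vector with integer sum M. If a, b are two feasible vectors (nonnegative integers summing to M with each component in {floor(x_i), ceil(x_i)}) that both minimize ∑ |x_i - m_i|^q for some q ≥ 1, then for every r ≥ 1, ∑ |x_i - a_i|^r = ∑ |x_i - b_i|^r; i.e., the ORIC-type minimizers are simultaneously optimal for all L^r norms. -/
/-!
Two feasible roundings differ only at indices where one rounds `x i` down and the other up, with
errors `fract (x i)` and `1 - fract (x i)`. If `a` rounds up at `i` and `b` rounds up at `j`,
exchanging the values of `a` and `b` on `{i, j}` keeps both feasible, so minimality of both gives
`(1 - fᵢ)^q + fⱼ^q = fᵢ^q + (1 - fⱼ)^q`; since `t ↦ t^q - (1 - t)^q` is strictly increasing,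
`fᵢ = fⱼ`. So all indices where `a` and `b` differ share one fractional part `f`, and the
difference of the `L^r` error sums is `(f^r - (1 - f)^r) * ∑ (bᵢ - aᵢ) = 0`.
-/

open Finset

section Exchange

variable {ι γ M : Type*} [Fintype ι] [DecidableEq ι]

theorem sum_piecewise_add_sum [AddCommMonoid M] (s : Finset ι) (c : ι → γ → M) (a b : ι → γ) :
    ∑ i, c i (s.piecewise b a i) + ∑ i ∈ s, c i (a i) = ∑ i, c i (a i) + ∑ i ∈ s, c i (b i) := by
  have hpw : ∀ i, c i (s.piecewise b a i) = s.piecewise (fun i ↦ c i (b i)) (fun i ↦ c i (a i)) i :=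
    fun i ↦ by by_cases hi : i ∈ s <;> simp [hi]
  simp only [hpw, sum_piecewise, univ_inter, ← sum_add_sum_compl s (fun i ↦ c i (a i)),
    compl_eq_univ_sdiff]
  abel

theorem sum_eq_of_isMinOn_of_piecewise_mem [AddCommMonoid M] [PartialOrder M]
    [IsOrderedCancelAddMonoid M] {F : Set (ι → γ)} {s : Finset ι} {a b : ι → γ}
    (c : ι → γ → M) (ha : IsMinOn (fun m ↦ ∑ i, c i (m i)) F a)
    (hb : IsMinOn (fun m ↦ ∑ i, c i (m i)) F b)
    (hba : s.piecewise b a ∈ F) (hab : s.piecewise a b ∈ F) :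
    ∑ i ∈ s, c i (a i) = ∑ i ∈ s, c i (b i) := by
  refine le_antisymm (le_of_add_le_add_left (a := ∑ i, c i (a i)) ?_)
    (le_of_add_le_add_left (a := ∑ i, c i (b i)) ?_)
  · rw [← sum_piecewise_add_sum s c a b]
    exact add_le_add_left (ha hba) _
  · rw [← sum_piecewise_add_sum s c b a]
    exact add_le_add_left (hb hab) _

end Exchange

theorem exists_forall_ne_imp_eq_of_sum_eq {ι α β : Type*} [Fintype ι] [Nonempty β]
    [AddCommMonoid α] [LinearOrder α] [IsOrderedCancelAddMonoid α] {a b : ι → α}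
    (hab : ∑ i, a i = ∑ i, b i) (g : ι → β) (h : ∀ i j, b i < a i → a j < b j → g i = g j) :
    ∃ c, ∀ i, a i ≠ b i → g i = c := by
  by_cases hgt : ∃ i, b i < a i
  · obtain ⟨i₀, hi₀⟩ := hgt
    obtain ⟨j₀, -, hj₀⟩ : ∃ j ∈ univ, a j < b j := by
      by_contra! hle
      exact (sum_lt_sum (fun j _ ↦ hle j (mem_univ j)) ⟨i₀, mem_univ _, hi₀⟩).ne' hab
    refine ⟨g j₀, fun i hi ↦ ?_⟩
    rcases hi.lt_or_gt with hlt | hgt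
    · exact (h i₀ i hi₀ hlt).symm.trans (h i₀ j₀ hi₀ hj₀)
    · exact h i j₀ hgt hj₀
  · push Not at hgt
    have hEq := (sum_eq_sum_iff_of_le fun i _ ↦ hgt i).1 hab
    exact ⟨Classical.arbitrary β, fun i hi ↦ absurd (hEq i (mem_univ i)) hi⟩

theorem strictMonoOn_rpow_sub_rpow_one_sub {q : ℝ} (hq : 0 < q) :
    StrictMonoOn (fun t : ℝ ↦ t ^ q - (1 - t) ^ q) (Set.Icc 0 1) := by
  intro s hs t ht hst
  have h₁ : s ^ q < t ^ q := Real.rpow_lt_rpow hs.1 hst hq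
  have h₂ : (1 - t) ^ q ≤ (1 - s) ^ q :=
    Real.rpow_le_rpow (by linarith [ht.2]) (by linarith) hq.le
  dsimp only
  linarith

def IsFloorOrCeil (t : ℝ) (u : ℕ) : Prop := (u : ℤ) = ⌊t⌋ ∨ (u : ℤ) = ⌈t⌉

namespace IsFloorOrCeil

variable {t : ℝ} {u v : ℕ}

theorem eq_floor_of_lt (hu : IsFloorOrCeil t u) (hv : IsFloorOrCeil t v) (huv : u < v) :
    (u : ℤ) = ⌊t⌋ ∧ (v : ℤ) = ⌊t⌋ + 1 := by
  have := Int.ceil_le_floor_add_one t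
  have := Int.floor_le_ceil t
  unfold IsFloorOrCeil at hu hv
  omega

theorem abs_sub_of_lt (hu : IsFloorOrCeil t u) (hv : IsFloorOrCeil t v) (huv : u < v) :
    |t - u| = Int.fract t ∧ |t - v| = 1 - Int.fract t := by
  obtain ⟨hu', hv'⟩ := eq_floor_of_lt hu hv huv
  have hu'' : (u : ℝ) = ⌊t⌋ := by exact_mod_cast hu'
  have hv'' : (v : ℝ) = ⌊t⌋ + 1 := by exact_mod_cast hv'
  rw [hu'', hv'', Int.self_sub_floor, abs_of_nonneg (Int.fract_nonneg t),
    show t - (⌊t⌋ + 1) = Int.fract t - 1 by rw [← Int.self_sub_floor]; ring,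
    abs_of_neg (by linarith [Int.fract_lt_one t])]
  exact ⟨rfl, by ring⟩

theorem abs_sub_rpow_sub_abs_sub_rpow (hu : IsFloorOrCeil t u) (hv : IsFloorOrCeil t v) (r : ℝ) :
    |t - u| ^ r - |t - v| ^ r = ((v : ℝ) - u) * (Int.fract t ^ r - (1 - Int.fract t) ^ r) := by
  rcases lt_trichotomy u v with huv | rfl | hvu
  · obtain ⟨hu', hv'⟩ := abs_sub_of_lt hu hv huv
    have hsucc : (v : ℝ) = u + 1 := by
      have := eq_floor_of_lt hu hv huv
      exact_mod_cast (show v = u + 1 by omega)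
    rw [hu', hv', hsucc]
    ring
  · simp
  · obtain ⟨hv', hu'⟩ := abs_sub_of_lt hv hu hvu
    have hsucc : (u : ℝ) = v + 1 := by
      have := eq_floor_of_lt hv hu hvu
      exact_mod_cast (show u = v + 1 by omega)
    rw [hu', hv', hsucc]
    ring

end IsFloorOrCeil

def IsRounding {ι : Type*} [Fintype ι] (x : ι → ℝ) (M : ℕ) (m : ι → ℕ) : Prop :=
  ∑ i, m i = M ∧ ∀ i, IsFloorOrCeil (x i) (m i)

section Rounding

variable {ι : Type*} [Fintype ι] [DecidableEq ι] {x : ι → ℝ} {M : ℕ} {a b : ι → ℕ}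

theorem IsRounding.piecewise (ha : IsRounding x M a) (hb : IsRounding x M b) {s : Finset ι}
    (hs : ∑ i ∈ s, a i = ∑ i ∈ s, b i) : IsRounding x M (s.piecewise b a) := by
  refine ⟨?_, fun i ↦ s.piecewise_cases b a _ (hb.2 i) (ha.2 i)⟩
  have := sum_piecewise_add_sum s (fun _ n ↦ n) a b
  simp only [hs, ha.1] at this
  exact add_right_cancel this

theorem IsRounding.fract_eq_of_isMinOn {q : ℝ} (hq : 0 < q)
    (ha : IsRounding x M a) (hb : IsRounding x M b)
    (hamin : IsMinOn (fun m ↦ ∑ i, |x i - m i| ^ q) {m | IsRounding x M m} a)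
    (hbmin : IsMinOn (fun m ↦ ∑ i, |x i - m i| ^ q) {m | IsRounding x M m} b)
    {i j : ι} (hi : b i < a i) (hj : a j < b j) : Int.fract (x i) = Int.fract (x j) := by
  have hij : i ≠ j := by rintro rfl; omega
  have hi' := (hb.2 i).eq_floor_of_lt (ha.2 i) hi
  have hj' := (ha.2 j).eq_floor_of_lt (hb.2 j) hj
  obtain ⟨hbi, hai⟩ := (hb.2 i).abs_sub_of_lt (ha.2 i) hi
  obtain ⟨haj, hbj⟩ := (ha.2 j).abs_sub_of_lt (hb.2 j) hj
  have hs : ∑ k ∈ {i, j}, a k = ∑ k ∈ {i, j}, b k := by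
    rw [sum_pair hij, sum_pair hij]
    omega
  have hexch := sum_eq_of_isMinOn_of_piecewise_mem (fun k (n : ℕ) ↦ |x k - n| ^ q) hamin hbmin
    (ha.piecewise hb hs) (hb.piecewise ha hs.symm)
  simp only [sum_pair hij, hai, haj, hbi, hbj] at hexch
  have hmem : ∀ k, Int.fract (x k) ∈ Set.Icc (0 : ℝ) 1 :=
    fun k ↦ ⟨Int.fract_nonneg _, (Int.fract_lt_one _).le⟩
  exact ((strictMonoOn_rpow_sub_rpow_one_sub hq).injOn (hmem j) (hmem i) (by linarith)).symm

end Rounding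

theorem stmt15_general (N : ℕ) (x : Fin N → ℝ)
    (M : ℕ) (q : ℝ) (hq : 1 ≤ q)
    (a b : Fin N → ℕ)
    (ha : ∑ i, a i = M) (ha2 : ∀ i, (a i : ℤ) = ⌊x i⌋ ∨ (a i : ℤ) = ⌈x i⌉)
    (hb : ∑ i, b i = M) (hb2 : ∀ i, (b i : ℤ) = ⌊x i⌋ ∨ (b i : ℤ) = ⌈x i⌉)
    (hamin : ∀ m : Fin N → ℕ, ∑ i, m i = M →
      (∀ i, (m i : ℤ) = ⌊x i⌋ ∨ (m i : ℤ) = ⌈x i⌉) →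
      ∑ i, |x i - (a i : ℝ)| ^ q ≤ ∑ i, |x i - (m i : ℝ)| ^ q)
    (hbmin : ∀ m : Fin N → ℕ, ∑ i, m i = M →
      (∀ i, (m i : ℤ) = ⌊x i⌋ ∨ (m i : ℤ) = ⌈x i⌉) →
      ∑ i, |x i - (b i : ℝ)| ^ q ≤ ∑ i, |x i - (m i : ℝ)| ^ q) :
    ∀ r : ℝ, 1 ≤ r →
      ∑ i, |x i - (a i : ℝ)| ^ r = ∑ i, |x i - (b i : ℝ)| ^ r := by
  intro r _
  have ha' : IsRounding x M a := ⟨ha, ha2⟩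
  have hb' : IsRounding x M b := ⟨hb, hb2⟩
  obtain ⟨f, hf⟩ := exists_forall_ne_imp_eq_of_sum_eq (ha.trans hb.symm) (fun i ↦ Int.fract (x i))
    fun i j hi hj ↦ ha'.fract_eq_of_isMinOn (by linarith) hb' (fun m hm ↦ hamin m hm.1 hm.2)
      (fun m hm ↦ hbmin m hm.1 hm.2) hi hj
  have hdiff : ∀ i,
      |x i - a i| ^ r - |x i - b i| ^ r = ((b i : ℝ) - a i) * (f ^ r - (1 - f) ^ r) := by
    intro i
    by_cases hab : a i = b i
    · simp [hab]
    · rw [← hf i hab]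
      exact (ha'.2 i).abs_sub_rpow_sub_abs_sub_rpow (hb'.2 i) r
  have hsum : ∑ i, ((b i : ℝ) - a i) = 0 := by
    rw [sum_sub_distrib, sub_eq_zero]
    exact_mod_cast hb.trans ha.symm
  rw [← sub_eq_zero, ← sum_sub_distrib, sum_congr rfl fun i _ ↦ hdiff i,
    ← sum_mul, hsum, zero_mul]

theorem stmt15 (N : ℕ) (hN : 1 ≤ N) (x : Fin N → ℝ) (hx : ∀ i, 0 < x i)
    (M : ℕ) (hsum : ∑ i, x i = (M : ℝ)) (q : ℝ) (hq : 1 ≤ q)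
    (a b : Fin N → ℕ)
    (ha : ∑ i, a i = M) (ha2 : ∀ i, (a i : ℤ) = ⌊x i⌋ ∨ (a i : ℤ) = ⌈x i⌉)
    (hb : ∑ i, b i = M) (hb2 : ∀ i, (b i : ℤ) = ⌊x i⌋ ∨ (b i : ℤ) = ⌈x i⌉)
    (hamin : ∀ m : Fin N → ℕ, ∑ i, m i = M →
      (∀ i, (m i : ℤ) = ⌊x i⌋ ∨ (m i : ℤ) = ⌈x i⌉) →
      ∑ i, |x i - (a i : ℝ)| ^ q ≤ ∑ i, |x i - (m i : ℝ)| ^ q)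
    (hbmin : ∀ m : Fin N → ℕ, ∑ i, m i = M →
      (∀ i, (m i : ℤ) = ⌊x i⌋ ∨ (m i : ℤ) = ⌈x i⌉) →
      ∑ i, |x i - (b i : ℝ)| ^ q ≤ ∑ i, |x i - (m i : ℝ)| ^ q) :
    ∀ r : ℝ, 1 ≤ r →
      ∑ i, |x i - (a i : ℝ)| ^ r = ∑ i, |x i - (b i : ℝ)| ^ r :=
  stmt15_general N x M q hq a b ha ha2 hb hb2 hamin hbmin
end
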